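/- Let (θ_n)_{n≥1} ⊂ (0,1) with θ_n → 0 and sup_n θ_n < 1, and define θ̄_n := sup{ θ_{k_1}·θ_{k_2}·⋯·θ_{k_ℓ} : ℓ ≥ 1, k_1, …, k_ℓ ≥ 1, k_1 + ⋯ + k_ℓ ≥ n }. Then (θ̄_n) is a regular sequence (i.e. (θ̄_n) ⊂ (0,1), θ̄_n is decreasing with θ̄_n → 0, and θ̄_{n+m} ≥ θ̄_n·θ̄_m for all n,m ≥ 1), and if ‖·‖ and ‖·‖′ are norms on c₀₀ satisfying the implicit mixed Tsirelson equation with parameters (θ_n) and (θ̄_n) respectively, then ‖x‖ = ‖x‖′ for all x ∈ c₀₀ (i.e. T(θ_n,S_n)_{n∈ℕ} is naturally isometric to T(θ̄_n,S_n)_{n∈ℕ}). -/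

import Mathlib

open Filter

noncomputable section

/-- `c₀₀`: the finitely supported real sequences. -/
abbrev C00 : Type := ℕ →₀ ℝ

/-- The unit vector basis of `c₀₀`. -/
def eBasis (i : ℕ) : C00 := Finsupp.single i 1

/-- `f` is a norm on `c₀₀`. -/
def IsNorm (f : C00 → ℝ) : Prop :=
  (∀ v w : C00, f (v + w) ≤ f v + f w) ∧
  (∀ (c : ℝ) (v : C00), f (c • v) = |c| * f v) ∧
  (∀ v : C00, v ≠ 0 → 0 < f v)

/-- `E < F` for finite sets of naturals: every element of `E` is smaller than
every element of `F` (vacuously true if one of them is empty). -/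
def FinLt (E F : Finset ℕ) : Prop := ∀ a ∈ E, ∀ b ∈ F, a < b

/-- `min ran(v)` = the minimum of the support of `v`. -/
def minSupp (v : C00) : ℕ := sInf {j | v j ≠ 0}

/-- `max ran(v)` = the maximum of the support of `v`. -/
def maxSupp (v : C00) : ℕ := sSup {j | v j ≠ 0}

/-- `ran(v)`: the smallest integer interval containing the support of `v`. -/
def ranSet (v : C00) : Set ℕ := Set.Icc (minSupp v) (maxSupp v)

/-- `E` is an interval of naturals. -/
def IsInterval (E : Finset ℕ) : Prop :=
  ∀ a ∈ E, ∀ b ∈ E, ∀ c : ℕ, a ≤ c → c ≤ b → c ∈ E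

/-- The Schreier families `S_n`, `n ∈ ℕ`. -/
def SchreierFam : ℕ → Set (Finset ℕ)
  | 0 => {F : Finset ℕ | F.card ≤ 1}
  | (n + 1) => {F : Finset ℕ | ∃ (k : ℕ) (Fs : Fin k → Finset ℕ),
      (∀ i, Fs i ∈ SchreierFam n) ∧
      (∀ i j : Fin k, i < j → FinLt (Fs i) (Fs j)) ∧
      (∀ i, ∀ a ∈ Fs i, k ≤ a) ∧
      F = Finset.univ.biUnion Fs}

/-- `S_ω = {F : n ≤ F and F ∈ S_n for some n}`. -/
def SchreierOmega : Set (Finset ℕ) :=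
  {F : Finset ℕ | ∃ n : ℕ, (∀ a ∈ F, n ≤ a) ∧ F ∈ SchreierFam n}

/-- The restriction `Ex` of `x` to a finite set `E`. -/
def restr (E : Finset ℕ) (v : C00) : C00 := v.filter (fun j => j ∈ E)

/-- `(E_i)` is an admissible family of (nonempty, finite) sets for the family `S`:
`E_1 < E_2 < ⋯` and `{min E_i} ∈ S`. -/
def AdmissibleSets (S : Set (Finset ℕ)) {m : ℕ} (E : Fin m → Finset ℕ) : Prop :=
  (∀ i, (E i).Nonempty) ∧
  (∀ i j : Fin m, i < j → FinLt (E i) (E j)) ∧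
  (Finset.univ.image fun i => sInf ((E i : Set ℕ))) ∈ S

/-- `(E_i)` is an admissible family of (nonempty) intervals for the family `S`. -/
def AdmissibleIntervals (S : Set (Finset ℕ)) {m : ℕ} (E : Fin m → Finset ℕ) : Prop :=
  (∀ i, (E i).Nonempty ∧ IsInterval (E i)) ∧
  (∀ i j : Fin m, i < j → FinLt (E i) (E j)) ∧
  (Finset.univ.image fun i => sInf ((E i : Set ℕ))) ∈ S

/-- `nrm` satisfies the implicit mixed Tsirelson norm equation with parameters `θ_q`
and families `Sq q` (`q ≥ 1`):
`‖x‖ = max(‖x‖_∞, sup{θ_q Σ ‖E_i x‖ : q ≥ 1, (E_i) q-admissible})`. -/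
def MixedTsirelsonNormGen (θ : ℕ → ℝ) (Sq : ℕ → Set (Finset ℕ)) (nrm : C00 → ℝ) : Prop :=
  ∀ x : C00, nrm x =
    max (sSup {r : ℝ | ∃ j : ℕ, r = |x j|})
      (sSup {r : ℝ | ∃ (q m : ℕ) (E : Fin m → Finset ℕ), 1 ≤ q ∧
        AdmissibleSets (Sq q) E ∧ r = θ q * ∑ i, nrm (restr (E i) x)})

/-- `nrm` is the norm of the mixed Tsirelson space `T(θ_n, S_n)_{n ∈ ℕ}`. -/
def MixedTsirelsonNorm (θ : ℕ → ℝ) (nrm : C00 → ℝ) : Prop :=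
  MixedTsirelsonNormGen θ SchreierFam nrm

/-- `(θ_n)_{n ≥ 1}` is a regular sequence. -/
def RegularSeq (θ : ℕ → ℝ) : Prop :=
  (∀ n : ℕ, 1 ≤ n → 0 < θ n ∧ θ n < 1) ∧
  (∀ n : ℕ, 1 ≤ n → θ (n + 1) ≤ θ n) ∧
  Tendsto θ atTop (nhds 0) ∧
  (∀ n m : ℕ, 1 ≤ n → 1 ≤ m → θ n * θ m ≤ θ (n + m))

/-- The `i`-th block `Σ_{j = m_i}^{m_{i+1} - 1} a_j x_j` of a block sequence of `(x_j)`
with coefficients `a` and breakpoints `m`. -/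
def blk (x : ℕ → C00) (a : ℕ → ℝ) (m : ℕ → ℕ) (i : ℕ) : C00 :=
  ∑ j ∈ Finset.Ico (m i) (m (i + 1)), a j • x j

/-- The minimum of the range w.r.t. `(x_j)` of the `i`-th block: the least `j` in
`[m_i, m_{i+1})` with `a_j ≠ 0`. -/
def minRangeIdx (a : ℕ → ℝ) (m : ℕ → ℕ) (i : ℕ) : ℕ :=
  sInf {j : ℕ | j ∈ Finset.Ico (m i) (m (i + 1)) ∧ a j ≠ 0}

/-- `(x_i)` is an (infinite) block sequence of `(e_i)`: nonzero and `x_1 < x_2 < ⋯`. -/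
def IsBlockSeq (x : ℕ → C00) : Prop :=
  (∀ i, x i ≠ 0) ∧ ∀ i, FinLt (x i).support (x (i + 1)).support

/-- `(z_i)` is an (infinite) block sequence of `(x_i)`. -/
def IsBlockOf (x z : ℕ → C00) : Prop :=
  ∃ (a : ℕ → ℝ) (m : ℕ → ℕ), StrictMono m ∧ (∀ i, z i = blk x a m i) ∧ ∀ i, z i ≠ 0

/-- The set of `δ ≥ 0` witnessing the `ℓ_1`-estimate for all finite block sequences of
`(x_i)` that are admissible (for the family `S`) *with respect to `(x_i)`*. -/
def deltaSetX (S : Set (Finset ℕ)) (nrm : C00 → ℝ) (x : ℕ → C00) : Set ℝ :=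
  {δ : ℝ | 0 ≤ δ ∧ ∀ (n : ℕ) (a : ℕ → ℝ) (m : ℕ → ℕ), StrictMono m →
    (∀ i < n, blk x a m i ≠ 0) →
    (Finset.range n).image (fun i => minRangeIdx a m i) ∈ S →
    δ * ∑ i ∈ Finset.range n, nrm (blk x a m i) ≤
      nrm (∑ i ∈ Finset.range n, blk x a m i)}

/-- The set of `δ ≥ 0` witnessing the `ℓ_1`-estimate for all finite block sequences of
`(x_i)` that are admissible (for the family `S`) *with respect to `(e_i)`*. -/
def deltaSetE (S : Set (Finset ℕ)) (nrm : C00 → ℝ) (x : ℕ → C00) : Set ℝ :=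
  {δ : ℝ | 0 ≤ δ ∧ ∀ (n : ℕ) (a : ℕ → ℝ) (m : ℕ → ℕ), StrictMono m →
    (∀ i < n, blk x a m i ≠ 0) →
    (Finset.range n).image (fun i => minSupp (blk x a m i)) ∈ S →
    δ * ∑ i ∈ Finset.range n, nrm (blk x a m i) ≤
      nrm (∑ i ∈ Finset.range n, blk x a m i)}

/-- `δ_α(x_i)` (α-admissibility w.r.t. `(x_i)`), for the α-th family `S`. -/
def deltaX (S : Set (Finset ℕ)) (nrm : C00 → ℝ) (x : ℕ → C00) : ℝ :=
  sSup (deltaSetX S nrm x)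

/-- `δ_α((x_i),(e_i))` (α-admissibility w.r.t. `(e_i)`), for the α-th family `S`. -/
def deltaE (S : Set (Finset ℕ)) (nrm : C00 → ℝ) (x : ℕ → C00) : ℝ :=
  sSup (deltaSetE S nrm x)

/-- `nrm'` is an equivalent norm to `nrm`. -/
def EquivNormOn (nrm nrm' : C00 → ℝ) : Prop :=
  ∃ c C : ℝ, 0 < c ∧ (∀ x, c * nrm x ≤ nrm' x) ∧ ∀ x, nrm' x ≤ C * nrm x

/-- The set whose supremum is `δ̈`(S)`(y_i)`: all values `δ_S((z_i), |·|)` where `|·|`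
is an equivalent norm on `X` and `(z_i)` is a block sequence of `(y_i)`. -/
def dessSet (S : Set (Finset ℕ)) (nrm : C00 → ℝ) (y : ℕ → C00) : Set ℝ :=
  {d : ℝ | ∃ (nrm' : C00 → ℝ) (z : ℕ → C00), IsNorm nrm' ∧ EquivNormOn nrm nrm' ∧
    IsBlockOf y z ∧ d = deltaX S nrm' z}

/-- A Schreier hierarchy `(S_α)_{α < ω₁}`. -/
structure IsSchreierHierarchy (S : Ordinal → Set (Finset ℕ)) : Prop where
  zero : S 0 = {F : Finset ℕ | F.card ≤ 1}
  succ : ∀ α : Ordinal, α < Ordinal.omega 1 →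
    S (α + 1) = {F : Finset ℕ | ∃ (k : ℕ) (Fs : Fin k → Finset ℕ),
      (∀ i, Fs i ∈ S α) ∧
      (∀ i j : Fin k, i < j → FinLt (Fs i) (Fs j)) ∧
      (∀ i, ∀ a ∈ Fs i, k ≤ a) ∧
      F = Finset.univ.biUnion Fs}
  limit : ∀ α : Ordinal, α < Ordinal.omega 1 → Order.IsSuccLimit α →
    ∃ f : ℕ → Ordinal, StrictMono f ∧ (⨆ n, f n) = α ∧
      S α = {F : Finset ℕ | ∃ n : ℕ, (∀ a ∈ F, n ≤ a) ∧ F ∈ S (f n)}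

/-- `(y_i)` Δ-stabilizes `γ = (γ_α)_{α<ω₁}`. -/
def DeltaStabilizes (S : Ordinal → Set (Finset ℕ)) (nrm : C00 → ℝ)
    (y : ℕ → C00) (γ : Ordinal → ℝ) : Prop :=
  ∃ ε : ℕ → ℝ, Antitone ε ∧ Tendsto ε atTop (nhds 0) ∧
    ∀ α : Ordinal, α < Ordinal.omega 1 → ∃ m : ℕ, ∀ n : ℕ, m ≤ n →
      ∀ z : ℕ → C00, IsBlockOf (fun i => y (i + n)) z →
        |deltaX (S α) nrm z - γ α| < ε n

/-- `(y_i)` Δ_{(e_i)}-stabilizes `γ = (γ_α)_{α<ω₁}`. -/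
def DeltaStabilizesE (S : Ordinal → Set (Finset ℕ)) (nrm : C00 → ℝ)
    (y : ℕ → C00) (γ : Ordinal → ℝ) : Prop :=
  ∃ ε : ℕ → ℝ, Antitone ε ∧ Tendsto ε atTop (nhds 0) ∧
    ∀ α : Ordinal, α < Ordinal.omega 1 → ∃ m : ℕ, ∀ n : ℕ, m ≤ n →
      ∀ z : ℕ → C00, IsBlockOf (fun i => y (i + n)) z →
        |deltaE (S α) nrm z - γ α| < ε n

/-- `(e_i)` is a basic sequence for the norm `nrm`. -/
def IsBasicE (nrm : C00 → ℝ) : Prop :=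
  ∃ K : ℝ, ∀ (a : ℕ → ℝ) (m n : ℕ), m ≤ n →
    nrm (∑ i ∈ Finset.range m, a i • eBasis i) ≤
      K * nrm (∑ i ∈ Finset.range n, a i • eBasis i)

/-- The auxiliary norm `‖x‖_p` (`‖·‖_0 = ‖·‖`). -/
def pnorm (θ : ℕ → ℝ) (nrm : C00 → ℝ) (p : ℕ) (x : C00) : ℝ :=
  if p = 0 then nrm x
  else θ p * sSup {r : ℝ | ∃ (m : ℕ) (E : Fin m → Finset ℕ),
    AdmissibleIntervals (SchreierFam p) E ∧ r = ∑ i, nrm (restr (E i) x)}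

/-- The auxiliary seminorm `‖x‖_{N,p}`. -/
def nNorm (θ : ℕ → ℝ) (nrm : C00 → ℝ) (N p : ℕ) (x : C00) : ℝ :=
  sSup {r : ℝ | ∃ E : Fin N → Finset ℕ, (∀ i, IsInterval (E i)) ∧
    (∀ i j : Fin N, i < j → FinLt (E i) (E j)) ∧ (∀ i, ∀ a ∈ E i, N ≤ a) ∧
    r = ∑ i, pnorm θ nrm p (restr (E i) x)}

/-- The auxiliary norm `‖x‖_{S_q,p}`. -/
def sNNorm (θ : ℕ → ℝ) (nrm : C00 → ℝ) (q p : ℕ) (x : C00) : ℝ :=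
  sSup {r : ℝ | ∃ (m : ℕ) (E : Fin m → Finset ℕ),
    AdmissibleIntervals (SchreierFam q) E ∧ r = ∑ i, pnorm θ nrm p (restr (E i) x)}

/-!
The regularization dominates `θ`, so a solution `‖·‖'` for `θ̄` satisfies every lower estimate
`θ_q ∑ ‖E_i x‖' ≤ ‖x‖'` over `S_q`-admissible families. Conversely `S_{k+m} = S_k[S_m]`: grouping
an admissible family along this decomposition shows that a solution `‖·‖` for `θ` satisfies
`θ_{k_1} ⋯ θ_{k_ℓ} ∑ ‖E_i x‖ ≤ ‖x‖` on `S_{k_1+⋯+k_ℓ}`-admissible families, hence the estimates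
with constants `θ̄_q`. Finally, when the parameters are bounded by `b < 1`, a solution of the
implicit equation lies below every function that dominates `‖·‖_∞` and satisfies the same lower
estimates (induction on the size of the support), so each of the two norms is below the other.
-/

open Finset Function

namespace IsNorm

variable {f : C00 → ℝ}

lemma map_zero (hf : IsNorm f) : f 0 = 0 := by
  simpa using hf.2.1 0 0

lemma nonneg (hf : IsNorm f) (x : C00) : 0 ≤ f x := by
  rcases eq_or_ne x 0 with rfl | hx
  · exact hf.map_zero.ge
  · exact (hf.2.2 x hx).le

end IsNorm

section Restriction

lemma restr_restr_of_subset {E F : Finset ℕ} (h : E ⊆ F) (x : C00) :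
    restr E (restr F x) = restr E x := by
  ext j
  simp only [restr, Finsupp.filter_apply]
  grind

lemma restr_inter_support (E : Finset ℕ) (x : C00) : restr (E ∩ x.support) x = restr E x := by
  ext j
  simp only [restr, Finsupp.filter_apply, mem_inter, Finsupp.mem_support_iff]
  grind

lemma restr_empty (x : C00) : restr ∅ x = 0 :=
  (Finsupp.filter_eq_zero_iff _ _).2 fun _ h => absurd h (notMem_empty _)

lemma restr_eq_self {E : Finset ℕ} {x : C00} (h : x.support ⊆ E) : restr E x = x :=
  (Finsupp.filter_eq_self_iff _ _).2 fun _ hj => h (Finsupp.mem_support_iff.2 hj)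

lemma restr_eq_zero {E : Finset ℕ} {x : C00} (h : Disjoint x.support E) : restr E x = 0 :=
  (Finsupp.filter_eq_zero_iff _ _).2 fun _ hj => by
    by_contra hx
    exact disjoint_left.1 h (Finsupp.mem_support_iff.2 hx) hj

lemma card_support_restr_lt {E : Finset ℕ} {x : C00} (h : ¬ x.support ⊆ E) :
    (restr E x).support.card < x.support.card := by
  refine card_lt_card (filter_ssubset.2 ?_)
  simpa [Finset.not_subset] using h

end Restriction

section Chains

lemma FinLt.disjoint {E F : Finset ℕ} (h : FinLt E F) : Disjoint E F :=
  disjoint_left.2 fun a ha ha' => (h a ha a ha').false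

lemma FinLt.mono {E F E' F' : Finset ℕ} (h : FinLt E F) (hE : E' ⊆ E) (hF : F' ⊆ F) :
    FinLt E' F' :=
  fun a ha b hb => h a (hE ha) b (hF hb)

lemma FinLt.sInf_lt {E F : Finset ℕ} (h : FinLt E F) (hE : E.Nonempty) (hF : F.Nonempty) :
    sInf (E : Set ℕ) < sInf (F : Set ℕ) :=
  h _ (Nat.sInf_mem (coe_nonempty.2 hE)) _ (Nat.sInf_mem (coe_nonempty.2 hF))

lemma AdmissibleSets.pairwise_disjoint {S : Set (Finset ℕ)} {m : ℕ} {E : Fin m → Finset ℕ}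
    (hE : AdmissibleSets S E) : Pairwise (Disjoint on E) := by
  intro i j hij
  rcases hij.lt_or_gt with h | h
  · exact (hE.2.1 i j h).disjoint
  · exact (hE.2.1 j i h).disjoint.symm

variable {ι : Type*} {s : Set ι} {E : ι → Finset ℕ}

lemma IsChain.finLt_of_sInf_lt (hs : IsChain (fun i j => FinLt (E i) (E j)) s)
    (hne : ∀ i ∈ s, (E i).Nonempty) {i j : ι} (hi : i ∈ s) (hj : j ∈ s)
    (h : sInf (E i : Set ℕ) < sInf (E j : Set ℕ)) : FinLt (E i) (E j) := by
  rcases eq_or_ne i j with rfl | hij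
  · exact absurd h (lt_irrefl _)
  obtain hlt | hgt := hs hi hj hij
  · exact hlt
  · exact absurd h (hgt.sInf_lt (hne j hj) (hne i hi)).not_gt

lemma IsChain.injOn_sInf (hs : IsChain (fun i j => FinLt (E i) (E j)) s)
    (hne : ∀ i ∈ s, (E i).Nonempty) : s.InjOn fun i => sInf (E i : Set ℕ) := by
  intro i hi j hj h
  by_contra hij
  obtain hlt | hgt := hs hi hj hij
  · exact (hlt.sInf_lt (hne i hi) (hne j hj)).ne h
  · exact (hgt.sInf_lt (hne j hj) (hne i hi)).ne h.symm

lemma IsChain.pairwiseDisjoint (hs : IsChain (fun i j => FinLt (E i) (E j)) s) :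
    s.PairwiseDisjoint E := by
  intro i hi j hj hij
  obtain h | h := hs hi hj hij
  · exact h.disjoint
  · exact h.disjoint.symm

lemma sInf_biUnion (J : Finset ι) (hJ : J.Nonempty) (hne : ∀ i ∈ J, (E i).Nonempty) :
    sInf (J.biUnion E : Set ℕ) = sInf (J.image fun i => sInf (E i : Set ℕ) : Set ℕ) := by
  obtain ⟨i₀, hi₀, hμ⟩ := mem_image.1 (Nat.sInf_mem (coe_nonempty.2 (hJ.image
    fun i => sInf (E i : Set ℕ))))
  refine le_antisymm ?_ (le_csInf (coe_nonempty.2 (hJ.biUnion hne)) fun a ha => ?_)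
  · rw [← hμ]
    exact Nat.sInf_le (mem_biUnion.2 ⟨i₀, hi₀, Nat.sInf_mem (coe_nonempty.2 (hne i₀ hi₀))⟩)
  · obtain ⟨i, hi, hai⟩ := mem_biUnion.1 ha
    exact (Nat.sInf_le (mem_image_of_mem _ hi)).trans (Nat.sInf_le hai)

end Chains

namespace SchreierFam

lemma empty_mem (n : ℕ) : (∅ : Finset ℕ) ∈ SchreierFam n := by
  cases n with
  | zero => simp [SchreierFam]
  | succ n => exact ⟨0, fun _ => ∅, finZeroElim, finZeroElim, finZeroElim, by simp⟩

lemma one_le {q : ℕ} {F : Finset ℕ} (h : F ∈ SchreierFam (q + 1)) : ∀ a ∈ F, 1 ≤ a := by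
  obtain ⟨k, Fs, -, -, hk, rfl⟩ := h
  intro a ha
  obtain ⟨i, -, hai⟩ := mem_biUnion.1 ha
  exact i.pos.trans_le (hk i a hai)

lemma subset_succ {q : ℕ} (hq : 1 ≤ q) : SchreierFam q ⊆ SchreierFam (q + 1) := by
  intro F hF
  obtain ⟨q, rfl⟩ := Nat.exists_eq_add_of_le' hq
  refine ⟨1, fun _ => F, fun _ => hF, fun i j hij => absurd (Subsingleton.elim i j) hij.ne,
    fun _ => one_le hF, by simp⟩

lemma mono {q q' : ℕ} (hq : 1 ≤ q) (h : q ≤ q') : SchreierFam q ⊆ SchreierFam q' := by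
  induction q', h using Nat.le_induction with
  | base => exact subset_rfl
  | succ n hqn ih => exact ih.trans (subset_succ (hq.trans hqn))

/-- `S_{n+m} = S_n[S_m]`. -/
theorem exists_decomposition (m : ℕ) : ∀ n, ∀ F ∈ SchreierFam (n + m),
    ∃ 𝓖 : Finset (Finset ℕ), (∀ G ∈ 𝓖, G.Nonempty ∧ G ∈ SchreierFam m) ∧
      IsChain FinLt (𝓖 : Set (Finset ℕ)) ∧
      𝓖.image (fun G : Finset ℕ => sInf (G : Set ℕ)) ∈ SchreierFam n ∧ F = 𝓖.biUnion id := by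
  intro n
  induction n with
  | zero =>
    intro F hF
    rw [zero_add] at hF
    rcases F.eq_empty_or_nonempty with rfl | hFne
    · exact ⟨∅, by simp, by simp, empty_mem 0, by simp⟩
    · refine ⟨{F}, by simpa using ⟨hFne, hF⟩, by simp, ?_, by simp⟩
      simp [SchreierFam]
  | succ n ih =>
    intro F hF
    rw [show n + 1 + m = n + m + 1 by omega] at hF
    obtain ⟨k, Fs, hmem, hlt, hk, rfl⟩ := hF
    choose 𝓖 h𝓖 hchain hmins hunion using fun i => ih (Fs i) (hmem i)
    have hsub : ∀ i, ∀ G ∈ 𝓖 i, G ⊆ Fs i := fun i G hG =>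
      hunion i ▸ subset_biUnion_of_mem id hG
    have hmin_sub : ∀ i, ∀ a ∈ (𝓖 i).image fun G : Finset ℕ => sInf (G : Set ℕ), a ∈ Fs i := by
      intro i a ha
      obtain ⟨G, hG, rfl⟩ := mem_image.1 ha
      exact hsub i G hG (Nat.sInf_mem (coe_nonempty.2 (h𝓖 i G hG).1))
    refine ⟨univ.biUnion 𝓖, ?_, ?_, ?_, ?_⟩
    · intro G hG
      obtain ⟨i, -, hi⟩ := mem_biUnion.1 hG
      exact h𝓖 i G hi
    · intro G hG G' hG' hne
      obtain ⟨i, -, hi⟩ := mem_biUnion.1 hG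
      obtain ⟨j, -, hj⟩ := mem_biUnion.1 hG'
      rcases lt_trichotomy i j with hij | rfl | hji
      · exact Or.inl ((hlt i j hij).mono (hsub i G hi) (hsub j G' hj))
      · exact hchain i hi hj hne
      · exact Or.inr ((hlt j i hji).mono (hsub j G' hj) (hsub i G hi))
    · rw [biUnion_image]
      exact ⟨k, _, hmins, fun i j hij a ha b hb => hlt i j hij a (hmin_sub i a ha) b
        (hmin_sub j b hb), fun i a ha => hk i a (hmin_sub i a ha), rfl⟩
    · rw [biUnion_biUnion]
      exact biUnion_congr rfl fun i _ => hunion i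

end SchreierFam

/-- Families are indexed by an arbitrary finite set, so that subfamilies and families of unions
of members need no reindexing. -/
def LowerEstimate (S : Set (Finset ℕ)) (c : ℝ) (f : C00 → ℝ) : Prop :=
  ∀ ⦃ι : Type⦄ (I : Finset ι) (E : ι → Finset ℕ), (∀ i ∈ I, (E i).Nonempty) →
    IsChain (fun i j => FinLt (E i) (E j)) (I : Set ι) →
    I.image (fun i => sInf (E i : Set ℕ)) ∈ S →
    ∀ x, c * ∑ i ∈ I, f (restr (E i) x) ≤ f x

namespace LowerEstimate

variable {S : Set (Finset ℕ)} {c : ℝ} {f : C00 → ℝ}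

lemma admissibleSets (h : LowerEstimate S c f) {m : ℕ} {E : Fin m → Finset ℕ}
    (hE : AdmissibleSets S E) (x : C00) : c * ∑ i, f (restr (E i) x) ≤ f x := by
  refine h univ E (fun i _ => hE.1 i) (fun i _ j _ hij => ?_) hE.2.2 x
  rcases hij.lt_or_gt with hlt | hgt
  · exact Or.inl (hE.2.1 i j hlt)
  · exact Or.inr (hE.2.1 j i hgt)

/-- Sorting a chain by the minima of its members turns it into an admissible sequence. -/
lemma of_admissibleSets (h : ∀ (m : ℕ) (E : Fin m → Finset ℕ), AdmissibleSets S E →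
    ∀ x, c * ∑ i, f (restr (E i) x) ≤ f x) : LowerEstimate S c f := by
  intro ι I E hne hchain hS x
  set μ : ι → ℕ := fun i => sInf (E i : Set ℕ)
  set e := (I.image μ).orderIsoOfFin rfl
  choose σ hσI hσμ using fun t => mem_image.1 (e t).2
  have hmono : StrictMono (μ ∘ σ) := fun t t' htt => by
    simpa only [comp_apply, hσμ, Subtype.coe_lt_coe] using e.strictMono htt
  have hadm : AdmissibleSets S (E ∘ σ) := by
    refine ⟨fun t => hne _ (hσI t),
      fun t t' htt => hchain.finLt_of_sInf_lt hne (hσI t) (hσI t') (hmono htt), ?_⟩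
    convert hS using 1
    ext a
    refine ⟨fun ha => ?_, fun ha => mem_image.2 ⟨e.symm ⟨a, ha⟩, mem_univ _, ?_⟩⟩
    · obtain ⟨t, -, rfl⟩ := mem_image.1 ha
      change μ (σ t) ∈ _
      exact hσμ t ▸ (e t).2
    · change μ (σ _) = a
      rw [hσμ, OrderIso.apply_symm_apply]
  have hsum : ∑ t, f (restr (E (σ t)) x) = ∑ i ∈ I, f (restr (E i) x) := by
    refine sum_nbij σ (fun t _ => hσI t) (fun t _ t' _ h => hmono.injective (congrArg μ h))
      (fun i hi => ?_) fun _ _ => rfl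
    refine ⟨e.symm ⟨μ i, mem_image_of_mem μ hi⟩, mem_univ _, ?_⟩
    refine hchain.injOn_sInf hne (hσI _) hi ?_
    change μ (σ _) = μ i
    rw [hσμ, OrderIso.apply_symm_apply]
  rw [← hsum]
  exact h _ _ hadm x

lemma mono {T : Set (Finset ℕ)} (h : LowerEstimate T c f) (hST : S ⊆ T) :
    LowerEstimate S c f :=
  fun _ I E hne hchain hS x => h I E hne hchain (hST hS) x

lemma of_le {c' : ℝ} (h : LowerEstimate S c f) (hf : ∀ x, 0 ≤ f x) (hc : c' ≤ c) :
    LowerEstimate S c' f :=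
  fun _ I E hne hchain hS x =>
    (mul_le_mul_of_nonneg_right hc (sum_nonneg fun _ _ => hf _)).trans (h I E hne hchain hS x)

lemma csSup (hf : ∀ x, 0 ≤ f x) {C : Set ℝ} (hC : C.Nonempty)
    (h : ∀ c ∈ C, LowerEstimate S c f) : LowerEstimate S (sSup C) f := by
  intro ι I E hne hchain hS x
  rcases (sum_nonneg fun i _ => hf (restr (E i) x)).eq_or_lt with hs | hs
  · rw [← hs, mul_zero]
    exact hf x
  · rw [← le_div_iff₀ hs]
    exact csSup_le hC fun c hc => (le_div_iff₀ hs).2 (h c hc I E hne hchain hS x)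

end LowerEstimate

section Blocks

variable {ι : Type*} {I : Finset ι} {E : ι → Finset ℕ}

lemma sum_eq_sum_sum_filter_mem {α M : Type*} [DecidableEq ι] [DecidableEq α] [AddCommMonoid M]
    {μ : ι → α} {𝓖 : Finset (Finset α)} (hdisj : (𝓖 : Set (Finset α)).PairwiseDisjoint id)
    (hcover : ∀ i ∈ I, ∃ G ∈ 𝓖, μ i ∈ G) (g : ι → M) :
    ∑ i ∈ I, g i = ∑ G ∈ 𝓖, ∑ i ∈ I.filter (μ · ∈ G), g i := by
  rw [← sum_biUnion (t := fun G => I.filter (μ · ∈ G)) fun G hG G' hG' hGG' =>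
    disjoint_left.2 fun i hi hi' =>
      disjoint_left.1 (hdisj hG hG' hGG') (mem_filter.1 hi).2 (mem_filter.1 hi').2]
  refine sum_congr (ext fun i => ⟨fun hi => ?_, fun hi => ?_⟩) fun _ _ => rfl
  · obtain ⟨G, hG, hiG⟩ := hcover i hi
    exact mem_biUnion.2 ⟨G, hG, mem_filter.2 ⟨hi, hiG⟩⟩
  · obtain ⟨G, -, hiG⟩ := mem_biUnion.1 hi
    exact (mem_filter.1 hiG).1

lemma image_filter_sInf_mem {G : Finset ℕ} (hG : G ⊆ I.image fun i => sInf (E i : Set ℕ)) :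
    (I.filter fun i => sInf (E i : Set ℕ) ∈ G).image (fun i => sInf (E i : Set ℕ)) = G := by
  rw [← filter_image (p := (· ∈ G)), filter_mem_eq_inter, inter_eq_right.2 hG]

def blockUnion (I : Finset ι) (E : ι → Finset ℕ) (G : Finset ℕ) : Finset ℕ :=
  (I.filter fun i => sInf (E i : Set ℕ) ∈ G).biUnion E

variable {G : Finset ℕ}

lemma subset_blockUnion {i : ι} (hi : i ∈ I.filter fun i => sInf (E i : Set ℕ) ∈ G) :
    E i ⊆ blockUnion I E G :=
  subset_biUnion_of_mem E hi

lemma blockUnion_nonempty (hne : ∀ i ∈ I, (E i).Nonempty)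
    (hG : G ⊆ I.image fun i => sInf (E i : Set ℕ)) (hGne : G.Nonempty) :
    (blockUnion I E G).Nonempty :=
  (image_nonempty.1 ((image_filter_sInf_mem hG).symm ▸ hGne)).biUnion fun i hi =>
    hne i (filter_subset _ _ hi)

lemma sInf_blockUnion (hne : ∀ i ∈ I, (E i).Nonempty)
    (hG : G ⊆ I.image fun i => sInf (E i : Set ℕ)) (hGne : G.Nonempty) :
    sInf (blockUnion I E G : Set ℕ) = sInf (G : Set ℕ) := by
  rw [blockUnion, sInf_biUnion _ (image_nonempty.1 ((image_filter_sInf_mem hG).symm ▸ hGne))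
    fun i hi => hne i (filter_subset _ _ hi), image_filter_sInf_mem hG]

lemma IsChain.blockUnion (hchain : IsChain (fun i j => FinLt (E i) (E j)) (I : Set ι))
    (hne : ∀ i ∈ I, (E i).Nonempty) {𝓖 : Set (Finset ℕ)} (h𝓖 : IsChain FinLt 𝓖) :
    IsChain (fun G G' => FinLt (blockUnion I E G) (blockUnion I E G')) 𝓖 := by
  refine h𝓖.mono_rel fun G G' hGG' a ha b hb => ?_
  obtain ⟨i, hi, hai⟩ := mem_biUnion.1 ha
  obtain ⟨j, hj, hbj⟩ := mem_biUnion.1 hb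
  rw [mem_filter] at hi hj
  exact hchain.finLt_of_sInf_lt hne hi.1 hj.1 (hGG' _ hi.2 _ hj.2) a hai b hbj

end Blocks

namespace LowerEstimate

variable {f : C00 → ℝ}

/-- Split the minima of an `S_{n+m}`-chain into `S_m`-sets `G` forming an `S_n`-family: the
members with minimum in `G` form an `S_m`-chain, and their unions form an `S_n`-chain. -/
theorem schreierFam_add {n m : ℕ} {c d : ℝ} (hn : LowerEstimate (SchreierFam n) c f)
    (hm : LowerEstimate (SchreierFam m) d f) (hc : 0 ≤ c) :
    LowerEstimate (SchreierFam (n + m)) (c * d) f := by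
  classical
  intro ι I E hne hchain hS x
  set μ : ι → ℕ := fun i => sInf (E i : Set ℕ)
  obtain ⟨𝓖, h𝓖, h𝓖chain, h𝓖S, hP⟩ := SchreierFam.exists_decomposition m n _ hS
  have hGP : ∀ G ∈ 𝓖, G ⊆ I.image μ := fun G hG => hP ▸ subset_biUnion_of_mem id hG
  have hinner : ∀ G ∈ 𝓖, d * ∑ i ∈ I.filter (μ · ∈ G), f (restr (E i) x) ≤
      f (restr (blockUnion I E G) x) := by
    intro G hG
    have := hm _ E (fun i hi => hne i (filter_subset _ _ hi))
      (hchain.mono (coe_subset.2 (filter_subset _ _)))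
      ((image_filter_sInf_mem (hGP G hG)).symm ▸ (h𝓖 G hG).2) (restr (blockUnion I E G) x)
    rwa [sum_congr rfl fun i hi => by rw [restr_restr_of_subset (subset_blockUnion hi)]]
      at this
  have houter : c * ∑ G ∈ 𝓖, f (restr (blockUnion I E G) x) ≤ f x := by
    refine hn 𝓖 (blockUnion I E) (fun G hG => blockUnion_nonempty hne (hGP G hG) (h𝓖 G hG).1)
      (hchain.blockUnion hne h𝓖chain) ?_ x
    rwa [image_congr fun G hG => sInf_blockUnion hne (hGP G hG) (h𝓖 G hG).1]
  have hcover : ∀ i ∈ I, ∃ G ∈ 𝓖, μ i ∈ G := fun i hi => by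
    simpa [hP] using mem_image_of_mem μ hi
  calc c * d * ∑ i ∈ I, f (restr (E i) x)
      = c * ∑ G ∈ 𝓖, d * ∑ i ∈ I.filter (μ · ∈ G), f (restr (E i) x) := by
        rw [sum_eq_sum_sum_filter_mem (h𝓖chain.pairwiseDisjoint (E := id)) hcover, mul_assoc,
          mul_sum]
    _ ≤ c * ∑ G ∈ 𝓖, f (restr (blockUnion I E G) x) := by gcongr with G hG; exact hinner G hG
    _ ≤ f x := houter

theorem schreierFam_sum {θ : ℕ → ℝ}
    (hθ : ∀ k, 1 ≤ k → LowerEstimate (SchreierFam k) (θ k) f) (hθ0 : ∀ k, 1 ≤ k → 0 ≤ θ k) :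
    ∀ l : List ℕ, l ≠ [] → (∀ k ∈ l, 1 ≤ k) → LowerEstimate (SchreierFam l.sum) (l.map θ).prod f
  | [], hl, _ => absurd rfl hl
  | [k], _, hl => by simpa using hθ k (hl k (by simp))
  | k :: k' :: l, _, hl => by
    rw [List.sum_cons, List.map_cons, List.prod_cons]
    exact schreierFam_add (hθ k (hl k (by simp)))
      (schreierFam_sum hθ hθ0 (k' :: l) (List.cons_ne_nil _ _) fun a ha => hl a (by simp [ha]))
      (hθ0 k (hl k (by simp)))

end LowerEstimate

lemma sum_restr_le_sum_powerset {f : C00 → ℝ} (hf : IsNorm f) {ι : Type*} {I : Finset ι}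
    {E : ι → Finset ℕ} (hE : (I : Set ι).PairwiseDisjoint E) (x : C00) :
    ∑ i ∈ I, f (restr (E i) x) ≤ ∑ F ∈ x.support.powerset, f (restr F x) := by
  classical
  calc ∑ i ∈ I, f (restr (E i) x) = ∑ i ∈ I, f (restr (E i ∩ x.support) x) := by
        simp only [restr_inter_support]
    _ = ∑ F ∈ I.image fun i => E i ∩ x.support, f (restr F x) :=
        (sum_image_of_disjoint (g := fun F => f (restr F x))
          (by rw [bot_eq_empty, restr_empty, hf.map_zero])
          (hE.mono fun i => inter_subset_left)).symm
    _ ≤ ∑ F ∈ x.support.powerset, f (restr F x) :=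
        sum_le_sum_of_subset_of_nonneg
          (image_subset_iff.2 fun i _ => mem_powerset.2 inter_subset_right)
          fun F _ _ => hf.nonneg _

section MixedTsirelson

variable {θ : ℕ → ℝ} {f : C00 → ℝ}

lemma MixedTsirelsonNorm.supNorm_le (h : MixedTsirelsonNorm θ f) (x : C00) :
    sSup {r : ℝ | ∃ j : ℕ, r = |x j|} ≤ f x :=
  (le_max_left _ _).trans (h x).ge

theorem LowerEstimate.of_mixedTsirelsonNorm (hf : IsNorm f) (h : MixedTsirelsonNorm θ f)
    (hθ : ∀ q, 1 ≤ q → θ q ≤ 1) {q : ℕ} (hq : 1 ≤ q) :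
    LowerEstimate (SchreierFam q) (θ q) f := by
  refine of_admissibleSets fun m E hE x => ?_
  rw [h x]
  refine le_max_of_le_right (le_csSup ⟨∑ F ∈ x.support.powerset, f (restr F x), ?_⟩
    ⟨q, m, E, hq, hE, rfl⟩)
  rintro _ ⟨q, m, E, hq, hE, rfl⟩
  exact (mul_le_of_le_one_left (sum_nonneg fun _ _ => hf.nonneg _) (hθ q hq)).trans
    (sum_restr_le_sum_powerset hf (fun i _ j _ hij => hE.pairwise_disjoint hij) x)

end MixedTsirelson

lemma sum_restr_eq_of_support_subset {g : C00 → ℝ} (hg : g 0 = 0) {m : ℕ}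
    {E : Fin m → Finset ℕ} (hE : Pairwise (Disjoint on E)) {x : C00} {i₀ : Fin m}
    (hx : x.support ⊆ E i₀) : ∑ i, g (restr (E i) x) = g x := by
  rw [sum_eq_single i₀ (fun i _ hi => ?_) (absurd (mem_univ i₀)), restr_eq_self hx]
  rw [restr_eq_zero ((hE hi).symm.mono_left hx), hg]

/-- Strong induction on the size of the support: a norming family for `g x` either has a member
containing the support of `x`, and then contributes at most `b * g x`, or it splits `x` into
pieces of smaller support. -/
theorem le_of_mixedTsirelsonNorm {ψ : ℕ → ℝ} {b : ℝ} {f g : C00 → ℝ} (hb : b < 1)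
    (hψ : ∀ q, 1 ≤ q → 0 ≤ ψ q ∧ ψ q ≤ b) (hg : IsNorm g) (hgψ : MixedTsirelsonNorm ψ g)
    (hf_sup : ∀ x, sSup {r : ℝ | ∃ j : ℕ, r = |x j|} ≤ f x)
    (hf : ∀ q, 1 ≤ q → LowerEstimate (SchreierFam q) (ψ q) f) (x : C00) : g x ≤ f x := by
  induction h : x.support.card using Nat.strong_induction_on generalizing x with
  | _ n ih =>
  have hfx : 0 ≤ f x :=
    (Real.sSup_nonneg (by rintro _ ⟨j, rfl⟩; exact abs_nonneg _)).trans (hf_sup x)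
  have hB : sSup {r : ℝ | ∃ (q m : ℕ) (E : Fin m → Finset ℕ), 1 ≤ q ∧
      AdmissibleSets (SchreierFam q) E ∧ r = ψ q * ∑ i, g (restr (E i) x)} ≤
      max (f x) (b * g x) := by
    refine Real.sSup_le ?_ (le_max_of_le_left hfx)
    rintro _ ⟨q, m, E, hq, hE, rfl⟩
    by_cases hfull : ∃ i, x.support ⊆ E i
    · obtain ⟨i₀, hi₀⟩ := hfull
      rw [sum_restr_eq_of_support_subset hg.map_zero hE.pairwise_disjoint hi₀]
      exact le_max_of_le_right (mul_le_mul_of_nonneg_right (hψ q hq).2 (hg.nonneg x))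
    · simp only [not_exists] at hfull
      refine le_max_of_le_left ((mul_le_mul_of_nonneg_left (sum_le_sum fun i _ => ?_)
        (hψ q hq).1).trans ((hf q hq).admissibleSets hE x))
      exact ih _ (h ▸ card_support_restr_lt (hfull i)) _ rfl
  have hgx : g x ≤ max (f x) (b * g x) :=
    (hgψ x).trans_le (max_le ((hf_sup x).trans (le_max_left _ _)) hB)
  rcases le_max_iff.1 hgx with hle | hle
  · exact hle
  · nlinarith [hg.nonneg x]

def regProducts (θ : ℕ → ℝ) (n : ℕ) : Set ℝ :=
  {r : ℝ | ∃ l : List ℕ, l ≠ [] ∧ (∀ k ∈ l, 1 ≤ k) ∧ n ≤ l.sum ∧ r = (l.map θ).prod}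

def regularization (θ : ℕ → ℝ) (n : ℕ) : ℝ :=
  sSup (regProducts θ n)

lemma regProducts_nonempty (θ : ℕ → ℝ) (n : ℕ) : (regProducts θ n).Nonempty :=
  ⟨_, [max n 1], by simp, by simp, by simp, rfl⟩

section Regularization

variable {θ : ℕ → ℝ} (hθ : ∀ n, 1 ≤ n → 0 < θ n ∧ θ n < 1)
include hθ

lemma prod_map_pos {l : List ℕ} (hl : ∀ k ∈ l, 1 ≤ k) : 0 < (l.map θ).prod :=
  List.prod_pos (by simpa using fun k hk => (hθ k (hl k hk)).1)

lemma prod_map_le_of_mem {l : List ℕ} (hl : ∀ k ∈ l, 1 ≤ k) {k : ℕ} (hk : k ∈ l) :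
    (l.map θ).prod ≤ θ k := by
  rw [((List.perm_cons_erase hk).map θ).prod_eq, List.map_cons, List.prod_cons]
  refine mul_le_of_le_one_right (hθ k (hl k hk)).1.le ?_
  have hl' : ∀ a ∈ l.erase k, 1 ≤ a := fun a ha => hl a (List.mem_of_mem_erase ha)
  simpa using List.prod_map_le_prod_map₀ θ (fun _ => 1) (fun a ha => (hθ a (hl' a ha)).1.le)
    fun a ha => (hθ a (hl' a ha)).2.le

lemma prod_map_le_pow {b : ℝ} (hble : ∀ n, 1 ≤ n → θ n ≤ b) {l : List ℕ}
    (hl : ∀ k ∈ l, 1 ≤ k) : (l.map θ).prod ≤ b ^ l.length := by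
  simpa using List.prod_map_le_prod_map₀ θ (fun _ => b) (fun a ha => (hθ a (hl a ha)).1.le)
    fun a ha => hble a (hl a ha)

lemma bddAbove_regProducts (n : ℕ) : BddAbove (regProducts θ n) := by
  refine ⟨1, ?_⟩
  rintro _ ⟨l, hl, hl1, -, rfl⟩
  obtain ⟨k, hk⟩ := List.exists_mem_of_ne_nil l hl
  exact (prod_map_le_of_mem hθ hl1 hk).trans (hθ k (hl1 k hk)).2.le

lemma le_regularization {q : ℕ} (hq : 1 ≤ q) : θ q ≤ regularization θ q :=
  le_csSup (bddAbove_regProducts hθ q) ⟨[q], by simp, by simpa using hq, by simp, by simp⟩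

lemma regularization_antitone : Antitone (regularization θ) := fun n m hnm =>
  csSup_le_csSup (bddAbove_regProducts hθ n) (regProducts_nonempty θ m)
    fun _ ⟨l, hl, hl1, hml, hr⟩ => ⟨l, hl, hl1, hnm.trans hml, hr⟩

lemma regularization_pos (n : ℕ) : 0 < regularization θ n :=
  (hθ _ le_sup_right).1.trans_le ((le_regularization hθ le_sup_right).trans
    (regularization_antitone hθ (le_max_left n 1)))

lemma regularization_le {b : ℝ} (hble : ∀ n, 1 ≤ n → θ n ≤ b) (n : ℕ) :
    regularization θ n ≤ b := by
  refine csSup_le (regProducts_nonempty θ n) ?_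
  rintro _ ⟨l, hl, hl1, -, rfl⟩
  obtain ⟨k, hk⟩ := List.exists_mem_of_ne_nil l hl
  exact (prod_map_le_of_mem hθ hl1 hk).trans (hble k (hl1 k hk))

lemma regularization_mul_le (n m : ℕ) :
    regularization θ n * regularization θ m ≤ regularization θ (n + m) := by
  have hm := regularization_pos hθ m
  rw [← le_div_iff₀ hm]
  refine csSup_le (regProducts_nonempty θ n) ?_
  rintro _ ⟨l, hl, hl1, hnl, rfl⟩
  have hlpos := prod_map_pos hθ hl1
  rw [le_div_iff₀ hm, mul_comm, ← le_div_iff₀ hlpos]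
  refine csSup_le (regProducts_nonempty θ m) ?_
  rintro _ ⟨l', hl', hl1', hml', rfl⟩
  rw [le_div_iff₀ hlpos]
  refine le_csSup (bddAbove_regProducts hθ _) ⟨l' ++ l, by simp [hl'], ?_, ?_, ?_⟩
  · intro k hk
    rcases List.mem_append.1 hk with hk | hk
    exacts [hl1' k hk, hl1 k hk]
  · rw [List.sum_append]
    omega
  · rw [List.map_append, List.prod_append]

/-- A product with `k₁ + ⋯ + k_ℓ > L K` either has at least `L` factors or a factor `θ_k` with
`k ≥ K`. -/
lemma regularization_le_of_forall_le {b ε : ℝ} (hble : ∀ n, 1 ≤ n → θ n ≤ b) (hb : b < 1)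
    {L K n : ℕ} (hL : b ^ L ≤ ε) (hK : ∀ k, K ≤ k → θ k ≤ ε) (hn : L * K < n) :
    regularization θ n ≤ ε := by
  refine csSup_le (regProducts_nonempty θ n) ?_
  rintro _ ⟨l, -, hl1, hnl, rfl⟩
  by_cases hlen : L ≤ l.length
  · have hb0 : 0 ≤ b := (hθ 1 le_rfl).1.le.trans (hble 1 le_rfl)
    exact (prod_map_le_pow hθ hble hl1).trans ((pow_le_pow_of_le_one hb0 hb.le hlen).trans hL)
  · obtain ⟨k, hk, hKk⟩ : ∃ k ∈ l, K ≤ k := by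
      by_contra! hsmall
      have := List.sum_le_card_nsmul l K fun k hk => (hsmall k hk).le
      have := Nat.mul_le_mul_right K (not_le.1 hlen).le
      simp only [smul_eq_mul] at *
      omega
    exact (prod_map_le_of_mem hθ hl1 hk).trans (hK k hKk)

lemma tendsto_regularization (hto0 : Tendsto θ atTop (nhds 0)) {b : ℝ} (hb : b < 1)
    (hble : ∀ n, 1 ≤ n → θ n ≤ b) : Tendsto (regularization θ) atTop (nhds 0) := by
  refine tendsto_order.2 ⟨fun a ha => Eventually.of_forall fun n =>
    ha.trans (regularization_pos hθ n), fun ε hε => ?_⟩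
  obtain ⟨L, hL⟩ := exists_pow_lt_of_lt_one (half_pos hε) hb
  obtain ⟨K, hK⟩ := eventually_atTop.1 (hto0.eventually (ge_mem_nhds (half_pos hε)))
  filter_upwards [eventually_gt_atTop (L * K)] with n hn
  exact (regularization_le_of_forall_le hθ hble hb hL.le hK hn).trans_lt (half_lt_self hε)

theorem regularSeq_regularization (hto0 : Tendsto θ atTop (nhds 0)) {b : ℝ} (hb : b < 1)
    (hble : ∀ n, 1 ≤ n → θ n ≤ b) : RegularSeq (regularization θ) :=
  ⟨fun n _ => ⟨regularization_pos hθ n, (regularization_le hθ hble n).trans_lt hb⟩,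
    fun n _ => regularization_antitone hθ n.le_succ, tendsto_regularization hθ hto0 hb hble,
    fun n m _ _ => regularization_mul_le hθ n m⟩

end Regularization

theorem LowerEstimate.regularization {θ : ℕ → ℝ} {f : C00 → ℝ} (hf : ∀ x, 0 ≤ f x)
    (hθ0 : ∀ k, 1 ≤ k → 0 ≤ θ k) (hθ : ∀ k, 1 ≤ k → LowerEstimate (SchreierFam k) (θ k) f)
    {q : ℕ} (hq : 1 ≤ q) : LowerEstimate (SchreierFam q) (regularization θ q) f :=
  csSup hf (regProducts_nonempty θ q) fun _ ⟨l, hl, hl1, hql, hr⟩ =>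
    hr ▸ (schreierFam_sum hθ hθ0 l hl hl1).mono (SchreierFam.mono hq hql)

/-- The regularization: if `(θ_n) ⊂ (0,1)` with `θ_n → 0` and `sup_n θ_n < 1`, then
`θ̄_n := sup{θ_{k_1}⋯θ_{k_ℓ} : k_1 + ⋯ + k_ℓ ≥ n}` is a regular sequence and
`T(θ_n,S_n)` is naturally isometric to `T(θ̄_n,S_n)`. -/
theorem regularization_isometric
    (θ : ℕ → ℝ) (hpos : ∀ n : ℕ, 1 ≤ n → 0 < θ n ∧ θ n < 1)
    (hto0 : Tendsto θ atTop (nhds 0))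
    (b : ℝ) (hb : b < 1) (hble : ∀ n : ℕ, 1 ≤ n → θ n ≤ b) :
    RegularSeq (fun n : ℕ => sSup {r : ℝ | ∃ l : List ℕ, l ≠ [] ∧ (∀ k ∈ l, 1 ≤ k) ∧
      n ≤ l.sum ∧ r = (l.map θ).prod}) ∧
    ∀ nrm nrm' : C00 → ℝ, IsNorm nrm → IsNorm nrm' →
      MixedTsirelsonNorm θ nrm →
      MixedTsirelsonNorm (fun n : ℕ => sSup {r : ℝ | ∃ l : List ℕ, l ≠ [] ∧
        (∀ k ∈ l, 1 ≤ k) ∧ n ≤ l.sum ∧ r = (l.map θ).prod}) nrm' →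
      ∀ x : C00, nrm x = nrm' x := by
  change RegularSeq (regularization θ) ∧ ∀ nrm nrm' : C00 → ℝ, IsNorm nrm → IsNorm nrm' →
    MixedTsirelsonNorm θ nrm → MixedTsirelsonNorm (regularization θ) nrm' → ∀ x, nrm x = nrm' x
  have hθb : ∀ q, 1 ≤ q → 0 ≤ θ q ∧ θ q ≤ b := fun q hq => ⟨(hpos q hq).1.le, hble q hq⟩
  have hθ'b : ∀ q, 1 ≤ q → 0 ≤ regularization θ q ∧ regularization θ q ≤ b := fun q _ =>
    ⟨(regularization_pos hpos q).le, regularization_le hpos hble q⟩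
  refine ⟨regularSeq_regularization hpos hto0 hb hble, fun nrm nrm' hn hn' h h' x =>
    le_antisymm ?_ ?_⟩
  · refine le_of_mixedTsirelsonNorm hb hθb hn h h'.supNorm_le (fun q hq => ?_) x
    exact (LowerEstimate.of_mixedTsirelsonNorm hn' h' (fun k hk => (hθ'b k hk).2.trans hb.le)
      hq).of_le hn'.nonneg (le_regularization hpos hq)
  · refine le_of_mixedTsirelsonNorm hb hθ'b hn' h' h.supNorm_le (fun q hq => ?_) x
    exact LowerEstimate.regularization hn.nonneg (fun k hk => (hpos k hk).1.le)
      (fun k hk => LowerEstimate.of_mixedTsirelsonNorm hn h (fun k hk => (hpos k hk).2.le) hk) hq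

end
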